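/- The subgroups X := {u₂(x) : x ∈ F} and Y := {u₁(y) : y ∈ F} normalize C: for every x, y ∈ F, u₂(x)·C·u₂(x)⁻¹ = C and u₁(y)·C·u₁(y)⁻¹ = C. -/

import Mathlib

open Matrix

/-- `n(u, x₁, x₂) = [[1,u,x₁,x₂],[0,1,0,−ι(x₁)],[0,0,1,−ι(u)],[0,0,0,1]]`. -/
def nmat {E : Type*} [Field E] (ι : E →+* E) (u x₁ x₂ : E) :
    Matrix (Fin 4) (Fin 4) E :=
  !![1, u, x₁, x₂; 0, 1, 0, -ι x₁; 0, 0, 1, -ι u; 0, 0, 0, 1]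

/-- `C = {n(u, x₁, x₂) ∈ N₁ : u ∈ F}`. -/
def Cset {E : Type*} [Field E] (ι : E →+* E) : Set (Matrix (Fin 4) (Fin 4) E) :=
  {m | ∃ u x₁ x₂ : E, ι u = u ∧ x₂ + ι x₂ + u * ι x₁ + x₁ * ι u = 0 ∧
    m = nmat ι u x₁ x₂}

/-- `u₂(x) = I₄ + s·x·E₂₃`. -/
def u2mat {E : Type*} [Field E] (s x : E) : Matrix (Fin 4) (Fin 4) E :=
  1 + (s * x) • Matrix.single 1 2 1

/-- `u₁(y) = I₄ + s·y·(E₁₂ + E₃₄)`. -/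
def u1mat {E : Type*} [Field E] (s y : E) : Matrix (Fin 4) (Fin 4) E :=
  1 + (s * y) • (Matrix.single 0 1 1 + Matrix.single 2 3 1)

/-!
Both `u₂(x)` and `u₁(y)` have the form `1 + a • N` with `N * N = 0`, so `u(x)⁻¹ = u(-x)`.
Conjugation by `u₂(x)` sends `n(u, x₁, x₂)` to `n(u, x₁ - s x u, x₂)`, and conjugation by `u₁(y)`
sends it to `n(u, x₁, x₂ - s y tr(x₁))`. For `x, y, u ∈ F` the corrections `s x u` and
`s y tr(x₁)` are `ι`-antiinvariant, which is exactly what keeps the relation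
`tr(x₂) + u ι(x₁) + x₁ ι(u) = 0` intact. So conjugation maps `C` into itself for every `x ∈ F`,
and applying this also to `-x` gives equality.
-/

theorem one_add_smul_mul_one_add_smul {R A : Type*} [CommSemiring R] [Semiring A] [Algebra R A]
    {N : A} (hN : N * N = 0) (a b : R) :
    (1 + a • N) * (1 + b • N) = 1 + (a + b) • N := by
  rw [add_mul, mul_add, mul_add, one_mul, one_mul, mul_one, smul_mul_smul_comm, hN, smul_zero,
    add_zero, add_smul, add_assoc, add_comm (b • N)]

section

variable {E : Type*} [Field E]

theorem u2mat_mul (s x x' : E) : u2mat s x * u2mat s x' = u2mat s (x + x') := by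
  rw [u2mat, u2mat, u2mat, mul_add s]
  have hN : (single 1 2 1 : Matrix (Fin 4) (Fin 4) E) * single 1 2 1 = 0 := by simp
  exact one_add_smul_mul_one_add_smul hN (s * x) (s * x')

theorem u1mat_mul (s y y' : E) : u1mat s y * u1mat s y' = u1mat s (y + y') := by
  rw [u1mat, u1mat, u1mat, mul_add s]
  have hN : (single 0 1 1 + single 2 3 1 : Matrix (Fin 4) (Fin 4) E) *
      (single 0 1 1 + single 2 3 1) = 0 := by
    simp [add_mul, mul_add]
  exact one_add_smul_mul_one_add_smul hN (s * y) (s * y')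

theorem u2mat_mul_u2mat_neg (s x : E) : u2mat s x * u2mat s (-x) = 1 := by
  rw [u2mat_mul, add_neg_cancel, u2mat, mul_zero, zero_smul, add_zero]

theorem u1mat_mul_u1mat_neg (s y : E) : u1mat s y * u1mat s (-y) = 1 := by
  rw [u1mat_mul, add_neg_cancel, u1mat, mul_zero, zero_smul, add_zero]

theorem u2mat_inv (s x : E) : (u2mat s x)⁻¹ = u2mat s (-x) :=
  inv_eq_right_inv (u2mat_mul_u2mat_neg s x)

theorem u1mat_inv (s y : E) : (u1mat s y)⁻¹ = u1mat s (-y) :=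
  inv_eq_right_inv (u1mat_mul_u1mat_neg s y)

theorem u2mat_mul_nmat_mul_u2mat_neg (ι : E →+* E) {s x : E} (hs : ι s = -s) (hx : ι x = x)
    (u x₁ x₂ : E) :
    u2mat s x * nmat ι u x₁ x₂ * u2mat s (-x) = nmat ι u (x₁ - s * x * u) x₂ := by
  ext i j
  fin_cases i <;> fin_cases j <;>
    simp [u2mat, nmat, mul_apply, Fin.sum_univ_four, single_apply, hs, hx] <;> ring

theorem u1mat_mul_nmat_mul_u1mat_neg (ι : E →+* E) (s y u x₁ x₂ : E) :
    u1mat s y * nmat ι u x₁ x₂ * u1mat s (-y) = nmat ι u x₁ (x₂ - s * y * (x₁ + ι x₁)) := by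
  ext i j
  fin_cases i <;> fin_cases j <;>
    simp [u1mat, nmat, mul_apply, Fin.sum_univ_four, single_apply]; ring

end

theorem Set.image_conj_eq_of_mapsTo {M : Type*} [Monoid M] {S : Set M} {g h : M}
    (hgh : g * h = 1) (hg : S.MapsTo (fun c => g * c * h) S)
    (hh : S.MapsTo (fun c => h * c * g) S) : (fun c => g * c * h) '' S = S := by
  refine hg.image_subset.antisymm fun c hc => ⟨h * c * g, hh hc, ?_⟩
  simp only [← mul_assoc, hgh, one_mul]
  rw [mul_assoc, hgh, mul_one]

section

variable {E : Type*} [Field E] {ι : E →+* E} {s : E}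

theorem u2mat_conj_mapsTo_Cset (hs : ι s = -s) {x : E} (hx : ι x = x) :
    (Cset ι).MapsTo (fun c => u2mat s x * c * u2mat s (-x)) (Cset ι) := by
  rintro _ ⟨u, x₁, x₂, hu, hN, rfl⟩
  refine ⟨u, x₁ - s * x * u, x₂, hu, ?_, u2mat_mul_nmat_mul_u2mat_neg ι hs hx u x₁ x₂⟩
  rw [map_sub, map_mul, map_mul, hs, hx, hu]
  linear_combination hN - x₁ * hu

theorem u1mat_conj_mapsTo_Cset (hι : ∀ x, ι (ι x) = x) (hs : ι s = -s) {y : E} (hy : ι y = y) :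
    (Cset ι).MapsTo (fun c => u1mat s y * c * u1mat s (-y)) (Cset ι) := by
  rintro _ ⟨u, x₁, x₂, hu, hN, rfl⟩
  refine ⟨u, x₁, x₂ - s * y * (x₁ + ι x₁), hu, ?_, u1mat_mul_nmat_mul_u1mat_neg ι s y u x₁ x₂⟩
  rw [map_sub, map_mul, map_mul, map_add, hs, hy, hι]
  linear_combination hN

theorem image_u2mat_conj_Cset (hs : ι s = -s) {x : E} (hx : ι x = x) :
    (fun c => u2mat s x * c * (u2mat s x)⁻¹) '' Cset ι = Cset ι := by
  have hx' : ι (-x) = -x := by rw [map_neg, hx]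
  rw [u2mat_inv]
  refine Set.image_conj_eq_of_mapsTo (u2mat_mul_u2mat_neg s x) (u2mat_conj_mapsTo_Cset hs hx) ?_
  simpa only [neg_neg] using u2mat_conj_mapsTo_Cset hs hx'

theorem image_u1mat_conj_Cset (hι : ∀ x, ι (ι x) = x) (hs : ι s = -s) {y : E} (hy : ι y = y) :
    (fun c => u1mat s y * c * (u1mat s y)⁻¹) '' Cset ι = Cset ι := by
  have hy' : ι (-y) = -y := by rw [map_neg, hy]
  rw [u1mat_inv]
  refine Set.image_conj_eq_of_mapsTo (u1mat_mul_u1mat_neg s y) (u1mat_conj_mapsTo_Cset hι hs hy) ?_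
  simpa only [neg_neg] using u1mat_conj_mapsTo_Cset hι hs hy'

end

theorem statement14_general {E : Type*} [Field E]
    (ι : E →+* E) (hinv : ∀ x, ι (ι x) = x)
    (s : E) (hss : ι s = -s) :
    (∀ x : E, ι x = x →
      (fun c => u2mat s x * c * (u2mat s x)⁻¹) '' Cset ι = Cset ι) ∧
    (∀ y : E, ι y = y →
      (fun c => u1mat s y * c * (u1mat s y)⁻¹) '' Cset ι = Cset ι) :=
  ⟨fun _ hx => image_u2mat_conj_Cset hss hx, fun _ hy => image_u1mat_conj_Cset hinv hss hy⟩

/-- The subgroups `X = {u₂(x) : x ∈ F}` and `Y = {u₁(y) : y ∈ F}` normalize `C`: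
`u₂(x)·C·u₂(x)⁻¹ = C` and `u₁(y)·C·u₁(y)⁻¹ = C` for all `x, y ∈ F`. -/
theorem statement14 {E : Type*} [Field E] (htwo : (2 : E) ≠ 0)
    (ι : E →+* E) (hinv : ∀ x, ι (ι x) = x) (hni : ι ≠ RingHom.id E)
    (s : E) (hs0 : s ≠ 0) (hss : ι s = -s) :
    (∀ x : E, ι x = x →
      (fun c => u2mat s x * c * (u2mat s x)⁻¹) '' Cset ι = Cset ι) ∧
    (∀ y : E, ι y = y →
      (fun c => u1mat s y * c * (u1mat s y)⁻¹) '' Cset ι = Cset ι) :=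
  statement14_general ι hinv s hss
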